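/- (Relative magnitude of skill shocks.) Under Assumption 4 with parameter k, fix integers t, t', t'' with t' ≤ t − 2 − k and t'' ≥ t + k, and assume cov(w_{t−2}, w_{t'}) ≠ 0, cov(w_{t−2}, w_{t''}) ≠ 0, and μ_t ≠ 0. Then, writing A := cov(w_t − w_{t−2}, w_{t'}) / cov(w_{t−2}, w_{t'}) and B := cov(w_t − w_{t−2}, w_{t''}) / cov(w_{t−2}, w_{t''}), one has 1 + A ≠ 0, Var(θ_{t−2}) ≠ 0, and Var(θ_t − θ_{t−2}) / Var(θ_{t−2}) = (B − A) / (1 + A). -/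

import Mathlib

open MeasureTheory ProbabilityTheory

/-- Covariance of two real-valued random variables under measure `P`. -/
noncomputable def cov {Ω : Type*} [MeasurableSpace Ω] (P : Measure Ω) (X Y : Ω → ℝ) : ℝ :=
  ∫ ω, (X ω - ∫ a, X a ∂P) * (Y ω - ∫ a, Y a ∂P) ∂P

/-- Variance of a real-valued random variable under measure `P`. -/
noncomputable def Var {Ω : Type*} [MeasurableSpace Ω] (P : Measure Ω) (X : Ω → ℝ) : ℝ :=
  cov P X X

/-!
Assumption 4 (i) makes the increments of skill uncorrelated with past skill, so
cov(θ_s, θ_r) = Var θ_r for r ≤ s, and by (ii) and (iii) the shocks drop out of cov(w_s, w_r)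
once |s − r| ≥ k. Hence cov(w_s, w_{t'}) = μ_s μ_{t'} Var θ_{t'} and
cov(w_s, w_{t''}) = μ_s μ_{t''} Var θ_s for s ∈ {t − 2, t}, which gives 1 + A = μ_t / μ_{t−2} and
1 + B = μ_t Var θ_t / (μ_{t−2} Var θ_{t−2}). Dividing,
(B − A) / (1 + A) = Var θ_t / Var θ_{t−2} − 1 = Var(θ_t − θ_{t−2}) / Var θ_{t−2}.
-/

section Covariance

variable {Ω : Type*} [MeasurableSpace Ω] {μ : Measure Ω}

lemma cov_eq_covariance (X Y : Ω → ℝ) : cov μ X Y = cov[X, Y; μ] := rfl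

variable [IsFiniteMeasure μ]

lemma covariance_const_mul_add_const_mul_add {X Y U V : Ω → ℝ} (hX : MemLp X 2 μ)
    (hY : MemLp Y 2 μ) (hU : MemLp U 2 μ) (hV : MemLp V 2 μ) (a b : ℝ)
    (hXV : cov[X, V; μ] = 0) (hUY : cov[U, Y; μ] = 0) :
    cov[fun ω ↦ a * X ω + U ω, fun ω ↦ b * Y ω + V ω; μ] =
      a * b * cov[X, Y; μ] + cov[U, V; μ] := by
  have haX : MemLp (fun ω ↦ a * X ω) 2 μ := hX.const_mul a
  have hbY : MemLp (fun ω ↦ b * Y ω) 2 μ := hY.const_mul b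
  change cov[(fun ω ↦ a * X ω) + U, (fun ω ↦ b * Y ω) + V; μ] = _
  rw [covariance_add_left haX hU (hbY.add hV), covariance_add_right haX hbY hV,
    covariance_add_right hU hbY hV, covariance_const_mul_left, covariance_const_mul_left,
    covariance_const_mul_right, covariance_const_mul_right, hXV, hUY]
  ring

lemma one_add_covariance_fun_sub_left_div {X Y Z : Ω → ℝ} (hX : MemLp X 2 μ)
    (hY : MemLp Y 2 μ) (hZ : MemLp Z 2 μ) (hYZ : cov[Y, Z; μ] ≠ 0) :
    1 + cov[fun ω ↦ X ω - Y ω, Z; μ] / cov[Y, Z; μ] = cov[X, Z; μ] / cov[Y, Z; μ] := by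
  rw [covariance_fun_sub_left hX hY hZ]
  field_simp
  ring

lemma covariance_fun_sub_fun_sub_of_covariance_eq {X Y : Ω → ℝ} (hX : MemLp X 2 μ)
    (hY : MemLp Y 2 μ) (hXY : cov[X, Y; μ] = cov[Y, Y; μ]) :
    cov[fun ω ↦ X ω - Y ω, fun ω ↦ X ω - Y ω; μ] = cov[X, X; μ] - cov[Y, Y; μ] := by
  rw [covariance_fun_sub_fun_sub hX hY hX hY, covariance_comm Y X, hXY]
  ring

lemma covariance_eq_covariance_self_of_uncorrelated_increments {θ : ℤ → Ω → ℝ}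
    (hθ : ∀ t, MemLp (θ t) 2 μ) {r : ℤ}
    (hinc : ∀ s, r < s → cov[fun ω ↦ θ s ω - θ (s - 1) ω, θ r; μ] = 0) {s : ℤ} (hrs : r ≤ s) :
    cov[θ s, θ r; μ] = cov[θ r, θ r; μ] := by
  induction s, hrs using Int.leInduction with
  | base => rfl
  | succ s hrs ih =>
    have h := hinc (s + 1) (by omega)
    rw [covariance_fun_sub_left (hθ _) (hθ _) (hθ r), add_sub_cancel_right, ih] at h
    linarith

end Covariance

theorem relative_skill_shock_variance_general
    {Ω : Type*} [MeasurableSpace Ω] (P : Measure Ω) [IsProbabilityMeasure P]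
    (θ ε : ℤ → Ω → ℝ) (μ : ℤ → ℝ) (w : ℤ → Ω → ℝ)
    (hθ : ∀ t, MemLp (θ t) 2 P) (hε : ∀ t, MemLp (ε t) 2 P)
    (hw : ∀ t ω, w t ω = μ t * θ t ω + ε t ω)
    (k : ℕ)
    (A4i : ∀ t t' : ℤ, 1 ≤ t - t' →
      cov P (fun ω => θ t ω - θ (t - 1) ω) (θ t') = 0)
    (A4ii : ∀ t t' : ℤ, cov P (θ t) (ε t') = 0)
    (A4iii : ∀ t t' : ℤ, (k : ℤ) ≤ |t - t'| → cov P (ε t) (ε t') = 0)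
    (t t' t'' : ℤ) (ht' : t' ≤ t - 2 - k) (ht'' : t + k ≤ t'')
    (h1 : cov P (w (t - 2)) (w t') ≠ 0)
    (h2 : cov P (w (t - 2)) (w t'') ≠ 0)
    (hμ : μ t ≠ 0)
    (A B : ℝ)
    (hA : A = cov P (fun ω => w t ω - w (t - 2) ω) (w t') / cov P (w (t - 2)) (w t'))
    (hB : B = cov P (fun ω => w t ω - w (t - 2) ω) (w t'') / cov P (w (t - 2)) (w t'')) :
    1 + A ≠ 0 ∧ Var P (θ (t - 2)) ≠ 0 ∧
      Var P (fun ω => θ t ω - θ (t - 2) ω) / Var P (θ (t - 2)) = (B - A) / (1 + A) := by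
  simp only [Var, cov_eq_covariance] at *
  have hw' : w = fun s ω ↦ μ s * θ s ω + ε s ω := funext₂ hw
  have hwL2 : ∀ s, MemLp (w s) 2 P := fun s ↦ hw' ▸ ((hθ s).const_mul (μ s)).add (hε s)
  have hθθ : ∀ r s, r ≤ s → cov[θ s, θ r; P] = cov[θ r, θ r; P] := fun r s hrs ↦
    covariance_eq_covariance_self_of_uncorrelated_increments hθ (fun s hs ↦ A4i s r (by omega)) hrs
  have hww : ∀ s r, (k : ℤ) ≤ |s - r| → cov[w s, w r; P] = μ s * μ r * cov[θ s, θ r; P] := by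
    intro s r hsr
    rw [hw', covariance_const_mul_add_const_mul_add (hθ s) (hθ r) (hε s) (hε r) _ _ (A4ii s r)
      (by rw [covariance_comm]; exact A4ii r s), A4iii s r hsr, add_zero]
  have hpast : ∀ s, t - 2 ≤ s → cov[w s, w t'; P] = μ s * μ t' * cov[θ t', θ t'; P] :=
    fun s hs ↦ by rw [hww s t' (by rw [abs_of_nonneg] <;> omega), hθθ t' s (by omega)]
  have hfuture : ∀ s, s ≤ t → cov[w s, w t''; P] = μ s * μ t'' * cov[θ s, θ s; P] :=
    fun s hs ↦ by
      rw [hww s t'' (by rw [abs_of_nonpos] <;> omega), covariance_comm, hθθ s t'' (by omega)]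
  obtain ⟨⟨hμ₀, hμ'⟩, hV'⟩ : (μ (t - 2) ≠ 0 ∧ μ t' ≠ 0) ∧ cov[θ t', θ t'; P] ≠ 0 := by
    simpa only [hpast (t - 2) le_rfl, mul_ne_zero_iff] using h1
  obtain ⟨⟨-, hμ''⟩, hV₀⟩ : (μ (t - 2) ≠ 0 ∧ μ t'' ≠ 0) ∧ cov[θ (t - 2), θ (t - 2); P] ≠ 0 := by
    simpa only [hfuture (t - 2) (by omega), mul_ne_zero_iff] using h2
  have hA' : 1 + A = μ t / μ (t - 2) := by
    rw [hA, one_add_covariance_fun_sub_left_div (hwL2 _) (hwL2 _) (hwL2 _) h1,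
      hpast t (by omega), hpast (t - 2) le_rfl]
    field_simp
  have hB' : 1 + B = μ t * cov[θ t, θ t; P] / (μ (t - 2) * cov[θ (t - 2), θ (t - 2); P]) := by
    rw [hB, one_add_covariance_fun_sub_left_div (hwL2 _) (hwL2 _) (hwL2 _) h2,
      hfuture t le_rfl, hfuture (t - 2) (by omega)]
    field_simp
  refine ⟨hA' ▸ div_ne_zero hμ hμ₀, hV₀, ?_⟩
  rw [covariance_fun_sub_fun_sub_of_covariance_eq (hθ t) (hθ (t - 2)) (hθθ _ _ (by omega)),
    show B - A = (1 + B) - (1 + A) by ring, hA', hB']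
  field_simp

/-- Relative magnitude of skill shocks: comparing IV estimands using past (`A`) vs future
(`B`) residuals as instruments identifies `Var (θ t − θ (t−2)) / Var (θ (t−2)) = (B−A)/(1+A)`. -/
theorem relative_skill_shock_variance
    {Ω : Type*} [MeasurableSpace Ω] (P : Measure Ω) [IsProbabilityMeasure P]
    (θ ε : ℤ → Ω → ℝ) (μ : ℤ → ℝ) (w : ℤ → Ω → ℝ)
    (hθ : ∀ t, MemLp (θ t) 2 P) (hε : ∀ t, MemLp (ε t) 2 P)
    (hw : ∀ t ω, w t ω = μ t * θ t ω + ε t ω)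
    (k : ℕ) (hk : 1 ≤ k)
    (A4i : ∀ t t' : ℤ, 1 ≤ t - t' →
      cov P (fun ω => θ t ω - θ (t - 1) ω) (θ t') = 0)
    (A4ii : ∀ t t' : ℤ, cov P (θ t) (ε t') = 0)
    (A4iii : ∀ t t' : ℤ, (k : ℤ) ≤ |t - t'| → cov P (ε t) (ε t') = 0)
    (t t' t'' : ℤ) (ht' : t' ≤ t - 2 - k) (ht'' : t + k ≤ t'')
    (h1 : cov P (w (t - 2)) (w t') ≠ 0)
    (h2 : cov P (w (t - 2)) (w t'') ≠ 0)
    (hμ : μ t ≠ 0)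
    (A B : ℝ)
    (hA : A = cov P (fun ω => w t ω - w (t - 2) ω) (w t') / cov P (w (t - 2)) (w t'))
    (hB : B = cov P (fun ω => w t ω - w (t - 2) ω) (w t'') / cov P (w (t - 2)) (w t'')) :
    1 + A ≠ 0 ∧ Var P (θ (t - 2)) ≠ 0 ∧
      Var P (fun ω => θ t ω - θ (t - 2) ω) / Var P (θ (t - 2)) = (B - A) / (1 + A) :=
  relative_skill_shock_variance_general P θ ε μ w hθ hε hw k A4i A4ii A4iii t t' t'' ht' ht'' h1 h2
    hμ A B hA hB
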